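/- The canonical amalgam of simple ∧-matroids of rank ≤ 3 is canonical in the following sense: if B1 ⊕_A B2 and B1' ⊕_{A'} B2' are both defined (A ⊆ B1, A ⊆ B2, B1 ∩ B2 = A, and similarly for the primed structures) and f1 : B1 ≅ B1', f2 : B2 ≅ B2' are isomorphisms with f1 ↾ A = f2 ↾ A and f1(A) = A', then the map f : B1 ∪ B2 → B1' ∪ B2' defined by f ↾ B1 = f1 and f ↾ B2 = f2 is an isomorphism from B1 ⊕_A B2 onto B1' ⊕_{A'} B2'. -/
import Mathlib


namespace PaoliniMatroids

open Function Set

/-- The "line" through `a` and `b` determined by a ternary collinearity relation `R`: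
the set `{a, b} ∪ {x | R a b x}`. -/
def lineOf {V : Type*} (R : V → V → V → Prop) (a b : V) : Set V :=
  {a, b} ∪ {x | R a b x}

/-- A simple ∧-matroid of rank ≤ 3, with domain `carrier` inside the ambient type `V`.
`R` is the ternary dependency (collinearity) relation and `wedge` is the 4-ary
intersection-of-lines function determined by `R`. -/
structure WM (V : Type*) where
  carrier : Set V
  R : V → V → V → Prop
  wedge : V → V → V → V → V
  R_mem : ∀ a b c, R a b c → a ∈ carrier ∧ b ∈ carrier ∧ c ∈ carrier
  wedge_mem : ∀ a b c d, a ∈ carrier → b ∈ carrier → c ∈ carrier → d ∈ carrier →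
      wedge a b c d ∈ carrier
  irrefl : ∀ a b c, R a b c → a ≠ b ∧ a ≠ c ∧ b ≠ c
  symm_swap : ∀ a b c, R a b c → R b a c
  symm_rot : ∀ a b c, R a b c → R b c a
  exchange : ∀ a b c d, R a b c → R a b d → ∀ x y z,
      x ∈ ({a, b, c, d} : Set V) → y ∈ ({a, b, c, d} : Set V) → z ∈ ({a, b, c, d} : Set V) →
      x ≠ y → x ≠ z → y ≠ z → R x y z
  wedge_det : ∀ a b c d, a ∈ carrier → b ∈ carrier → c ∈ carrier → d ∈ carrier →
      (a ≠ b ∧ c ≠ d ∧ lineOf R a b ≠ lineOf R c d ∧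
        wedge a b c d ∈ lineOf R a b ∧ wedge a b c d ∈ lineOf R c d ∧
        wedge a b c d ∉ ({a, b, c, d} : Set V)) ∨
      (wedge a b c d = a ∧ ¬ ∃ p, a ≠ b ∧ c ≠ d ∧ lineOf R a b ≠ lineOf R c d ∧
        p ∈ lineOf R a b ∧ p ∈ lineOf R c d ∧ p ∉ ({a, b, c, d} : Set V))

/-- An embedding of ∧-matroids: an injective map (on the domain) preserving `R`
in both directions and preserving the ∧-function. -/
structure IsEmb {V W : Type*} (M : WM V) (N : WM W) (f : V → W) : Prop where
  maps : ∀ x ∈ M.carrier, f x ∈ N.carrier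
  inj : ∀ x ∈ M.carrier, ∀ y ∈ M.carrier, f x = f y → x = y
  rel : ∀ a ∈ M.carrier, ∀ b ∈ M.carrier, ∀ c ∈ M.carrier,
      (M.R a b c ↔ N.R (f a) (f b) (f c))
  wedge : ∀ a ∈ M.carrier, ∀ b ∈ M.carrier, ∀ c ∈ M.carrier, ∀ d ∈ M.carrier,
      f (M.wedge a b c d) = N.wedge (f a) (f b) (f c) (f d)

/-- An isomorphism of ∧-matroids: an embedding which is onto the target domain. -/
def IsIso {V W : Type*} (M : WM V) (N : WM W) (f : V → W) : Prop :=
  IsEmb M N f ∧ N.carrier ⊆ f '' M.carrier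

/-- `M` is a substructure of `N`: the domain of `M` is a subset of that of `N`
(necessarily closed under the ∧-function of `N`) and `R`, `∧` are induced. -/
structure Sub {V : Type*} (M N : WM V) : Prop where
  sub : M.carrier ⊆ N.carrier
  rel : ∀ a ∈ M.carrier, ∀ b ∈ M.carrier, ∀ c ∈ M.carrier, (M.R a b c ↔ N.R a b c)
  wedge : ∀ a ∈ M.carrier, ∀ b ∈ M.carrier, ∀ c ∈ M.carrier, ∀ d ∈ M.carrier,
      M.wedge a b c d = N.wedge a b c d

/-- The matroid has rank 3: there are three (pairwise distinct) non-collinear points. -/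
def Rank3 {V : Type*} (M : WM V) : Prop :=
  ∃ a ∈ M.carrier, ∃ b ∈ M.carrier, ∃ c ∈ M.carrier,
    a ≠ b ∧ a ≠ c ∧ b ≠ c ∧ ¬ M.R a b c

/-- An automorphism of a ∧-matroid: a bijection of the domain preserving `R` in both
directions and preserving the ∧-function. -/
def IsAut {V : Type*} (M : WM V) (g : V → V) : Prop :=
  Set.BijOn g M.carrier M.carrier ∧
  (∀ a ∈ M.carrier, ∀ b ∈ M.carrier, ∀ c ∈ M.carrier,
      (M.R a b c ↔ M.R (g a) (g b) (g c))) ∧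
  (∀ a ∈ M.carrier, ∀ b ∈ M.carrier, ∀ c ∈ M.carrier, ∀ d ∈ M.carrier,
      g (M.wedge a b c d) = M.wedge (g a) (g b) (g c) (g d))

/-- A projective plane: a point-line incidence system where two distinct points lie on a
unique common line, two distinct lines meet in a unique point, and there are four points
no three of which are collinear. -/
structure ProjPlane where
  Point : Type
  Line : Type
  incid : Point → Line → Prop
  unique_line : ∀ p q : Point, p ≠ q → ∃! l : Line, incid p l ∧ incid q l
  unique_point : ∀ l m : Line, l ≠ m → ∃! p : Point, incid p l ∧ incid p m
  nondeg : ∃ p₁ p₂ p₃ p₄ : Point, p₁ ≠ p₂ ∧ p₁ ≠ p₃ ∧ p₁ ≠ p₄ ∧ p₂ ≠ p₃ ∧ p₂ ≠ p₄ ∧ p₃ ≠ p₄ ∧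
    ∀ l : Line, ¬(incid p₁ l ∧ incid p₂ l ∧ incid p₃ l) ∧
      ¬(incid p₁ l ∧ incid p₂ l ∧ incid p₄ l) ∧
      ¬(incid p₁ l ∧ incid p₃ l ∧ incid p₄ l) ∧
      ¬(incid p₂ l ∧ incid p₃ l ∧ incid p₄ l)

/-- The ternary relation of the simple rank-3 matroid `M_P` associated with a projective
plane: `R a b c` iff `a, b, c` are pairwise distinct collinear points. -/
def ProjPlane.Rmat (P : ProjPlane) (a b c : P.Point) : Prop :=
  a ≠ b ∧ a ≠ c ∧ b ≠ c ∧ ∃ l : P.Line, P.incid a l ∧ P.incid b l ∧ P.incid c l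

/-- `N` omits the matroid `M_P` of the projective plane `P`: no subset of the domain of `N`,
with the induced ternary relation, is isomorphic (as a matroid) to `M_P`. -/
def Omits {V : Type*} (N : WM V) (P : ProjPlane) : Prop :=
  ¬ ∃ e : P.Point → V, Function.Injective e ∧ (∀ p, e p ∈ N.carrier) ∧
      ∀ a b c, P.Rmat a b c ↔ N.R (e a) (e b) (e c)

/-- `x` lies on the line spanned by `a'` and `b'`, computed in `M1` if `x` lies in `M1`,
or in `M2` if `x` lies in `M2`. -/
def OnAmalgLine {V : Type*} (M1 M2 : WM V) (a' b' x : V) : Prop :=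
  (x ∈ M1.carrier ∧ x ∈ lineOf M1.R a' b') ∨ (x ∈ M2.carrier ∧ x ∈ lineOf M2.R a' b')

/-- The ternary relation of the canonical amalgam `M1 ⊕_{M0} M2`. -/
def AmalgR {V : Type*} (M0 M1 M2 : WM V) (a b c : V) : Prop :=
  M1.R a b c ∨ M2.R a b c ∨
    (a ≠ b ∧ a ≠ c ∧ b ≠ c ∧ ∃ a' ∈ M0.carrier, ∃ b' ∈ M0.carrier, a' ≠ b' ∧
      OnAmalgLine M1 M2 a' b' a ∧ OnAmalgLine M1 M2 a' b' b ∧ OnAmalgLine M1 M2 a' b' c)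

/-- `M3` is the canonical amalgam `M1 ⊕_{M0} M2`: its domain is the union of the domains,
its ternary relation is `AmalgR`, and its ∧-function is nontrivial exactly on pairs of
intersecting lines coming from `M1` or from `M2`, where it takes the value computed there. -/
structure IsCanonicalAmalgam {V : Type*} (M0 M1 M2 M3 : WM V) : Prop where
  carrier_eq : M3.carrier = M1.carrier ∪ M2.carrier
  R_iff : ∀ a b c, M3.R a b c ↔ AmalgR M0 M1 M2 a b c
  wedge_spec : ∀ a b c d, a ∈ M3.carrier → b ∈ M3.carrier → c ∈ M3.carrier →
      d ∈ M3.carrier →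
      (∃ Ml : WM V, (Ml = M1 ∨ Ml = M2) ∧ ∃ a' ∈ Ml.carrier, ∃ b' ∈ Ml.carrier,
          ∃ c' ∈ Ml.carrier, ∃ d' ∈ Ml.carrier,
          lineOf M3.R a b = lineOf M3.R a' b' ∧ lineOf M3.R c d = lineOf M3.R c' d' ∧
          Ml.wedge a' b' c' d' ≠ a' ∧ M3.wedge a b c d = Ml.wedge a' b' c' d') ∨
      (M3.wedge a b c d = a ∧
        ¬ ∃ Ml : WM V, (Ml = M1 ∨ Ml = M2) ∧ ∃ a' ∈ Ml.carrier, ∃ b' ∈ Ml.carrier,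
          ∃ c' ∈ Ml.carrier, ∃ d' ∈ Ml.carrier,
          lineOf M3.R a b = lineOf M3.R a' b' ∧ lineOf M3.R c d = lineOf M3.R c' d' ∧
          Ml.wedge a' b' c' d' ≠ a')


lemma mem_lineOf {V : Type*} {R : V → V → V → Prop} {a b x : V} :
    x ∈ lineOf R a b ↔ x = a ∨ x = b ∨ R a b x := by
  simp [lineOf, Set.mem_union, Set.mem_insert_iff, or_assoc]

lemma collinear_of_mem_line {V : Type*} (M : WM V) {a b x y z : V}
    (hx : x ∈ lineOf M.R a b) (hy : y ∈ lineOf M.R a b) (hz : z ∈ lineOf M.R a b)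
    (hxy : x ≠ y) (hxz : x ≠ z) (hyz : y ≠ z) : M.R x y z := by
  rw [mem_lineOf] at hx hy hz
  have ex2 : ∀ c d : V, M.R a b c → M.R a b d →
      x ∈ ({a,b,c,d} : Set V) → y ∈ ({a,b,c,d} : Set V) → z ∈ ({a,b,c,d} : Set V) →
      M.R x y z := fun c d h1 h2 m1 m2 m3 =>
    M.exchange a b c d h1 h2 x y z m1 m2 m3 hxy hxz hyz
  rcases hx with rfl | rfl | hx <;> rcases hy with rfl | rfl | hy <;>
    rcases hz with rfl | rfl | hz
  all_goals try exact absurd rfl hxy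
  all_goals try exact absurd rfl hxz
  all_goals try exact absurd rfl hyz
  all_goals try (refine ex2 _ _ hz hz ?_ ?_ ?_ <;> (simp; done))
  all_goals try (refine ex2 _ _ hy hy ?_ ?_ ?_ <;> (simp; done))
  all_goals try (refine ex2 _ _ hx hx ?_ ?_ ?_ <;> (simp; done))
  all_goals try (refine ex2 _ _ hy hz ?_ ?_ ?_ <;> (simp; done))
  all_goals try (refine ex2 _ _ hx hz ?_ ?_ ?_ <;> (simp; done))
  all_goals try (refine ex2 _ _ hx hy ?_ ?_ ?_ <;> (simp; done))
  have hax : a ≠ x := (M.irrefl a b x hx).2.1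
  have h1 : M.R a x y := M.exchange a b x y hx hy a x y (by simp) (by simp) (by simp)
    hax (M.irrefl a b y hy).2.1 hxy
  have h2 : M.R a x z := M.exchange a b x z hx hz a x z (by simp) (by simp) (by simp)
    hax (M.irrefl a b z hz).2.1 hxz
  exact M.exchange a x y z h1 h2 x y z (by simp) (by simp) (by simp) hxy hxz hyz

lemma line_subset {V : Type*} (M : WM V) {a b p q : V} (hpq : p ≠ q)
    (hp : p ∈ lineOf M.R a b) (hq : q ∈ lineOf M.R a b) :
    lineOf M.R a b ⊆ lineOf M.R p q := by
  intro x hx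
  rcases eq_or_ne x p with rfl | hxp
  · exact mem_lineOf.mpr (Or.inl rfl)
  rcases eq_or_ne x q with rfl | hxq
  · exact mem_lineOf.mpr (Or.inr (Or.inl rfl))
  exact mem_lineOf.mpr (Or.inr (Or.inr
    (collinear_of_mem_line M hp hq hx hpq (Ne.symm hxp) (Ne.symm hxq))))

lemma lineOf_eq {V : Type*} (M : WM V) {a b p q : V} (hab : a ≠ b) (hpq : p ≠ q)
    (hp : p ∈ lineOf M.R a b) (hq : q ∈ lineOf M.R a b) :
    lineOf M.R a b = lineOf M.R p q := by
  have h1 := line_subset M hpq hp hq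
  have ha : a ∈ lineOf M.R p q := h1 (mem_lineOf.mpr (Or.inl rfl))
  have hb : b ∈ lineOf M.R p q := h1 (mem_lineOf.mpr (Or.inr (Or.inl rfl)))
  exact Set.Subset.antisymm h1 (line_subset M hab ha hb)

lemma inter_unique {V : Type*} (M : WM V) {a b c d p q : V} (hab : a ≠ b) (hcd : c ≠ d)
    (hl : lineOf M.R a b ≠ lineOf M.R c d)
    (hp1 : p ∈ lineOf M.R a b) (hp2 : p ∈ lineOf M.R c d)
    (hq1 : q ∈ lineOf M.R a b) (hq2 : q ∈ lineOf M.R c d) : p = q := by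
  by_contra hpq
  exact hl ((lineOf_eq M hab hpq hp1 hq1).trans (lineOf_eq M hcd hpq hp2 hq2).symm)

/-- canonicity of the canonical amalgam: isomorphisms of the pieces agreeing
on the base glue to an isomorphism of the amalgams. -/
theorem canonical_amalgam_canonical (V W : Type)
    (A B1 B2 M3 : WM V) (A' B1' B2' M3' : WM W)
    (hA1 : Sub A B1) (hA2 : Sub A B2) (hint : B1.carrier ∩ B2.carrier = A.carrier)
    (hA1' : Sub A' B1') (hA2' : Sub A' B2')
    (hint' : B1'.carrier ∩ B2'.carrier = A'.carrier)
    (h3 : IsCanonicalAmalgam A B1 B2 M3) (h3' : IsCanonicalAmalgam A' B1' B2' M3')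
    (f1 f2 : V → W) (hf1 : IsIso B1 B1' f1) (hf2 : IsIso B2 B2' f2)
    (hagree : ∀ x ∈ A.carrier, f1 x = f2 x) (hAA' : f1 '' A.carrier = A'.carrier)
    (f : V → W) (hfB1 : ∀ x ∈ B1.carrier, f x = f1 x)
    (hfB2 : ∀ x ∈ B2.carrier, f x = f2 x) :
    IsIso M3 M3' f := by
  obtain ⟨he1, hs1⟩ := hf1
  obtain ⟨he2, hs2⟩ := hf2
  have hC : M3.carrier = B1.carrier ∪ B2.carrier := h3.carrier_eq
  have hC' : M3'.carrier = B1'.carrier ∪ B2'.carrier := h3'.carrier_eq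
  have hback1 : ∀ x ∈ M3.carrier, f x ∈ B1'.carrier → x ∈ B1.carrier := by
    intro x hx hfx
    rw [hC] at hx
    rcases hx with h | h
    · exact h
    · rw [hfB2 x h] at hfx
      have hA' : f2 x ∈ A'.carrier := by rw [← hint']; exact ⟨hfx, he2.maps x h⟩
      rw [← hAA'] at hA'
      obtain ⟨a0, ha0, hfa0⟩ := hA'
      have h2 : f2 a0 = f2 x := by rw [← hagree a0 ha0]; exact hfa0
      have heq := he2.inj a0 (hA2.sub ha0) x h h2
      exact hA1.sub (heq ▸ ha0)
  have hback2 : ∀ x ∈ M3.carrier, f x ∈ B2'.carrier → x ∈ B2.carrier := by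
    intro x hx hfx
    rw [hC] at hx
    rcases hx with h | h
    · rw [hfB1 x h] at hfx
      have hA' : f1 x ∈ A'.carrier := by rw [← hint']; exact ⟨he1.maps x h, hfx⟩
      rw [← hAA'] at hA'
      obtain ⟨a0, ha0, hfa0⟩ := hA'
      have heq := he1.inj a0 (hA1.sub ha0) x h hfa0
      exact hA2.sub (heq ▸ ha0)
    · exact h
  have hmaps : ∀ x ∈ M3.carrier, f x ∈ M3'.carrier := by
    intro x hx
    rw [hC] at hx
    rw [hC']
    rcases hx with h | h
    · exact Or.inl (by rw [hfB1 x h]; exact he1.maps x h)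
    · exact Or.inr (by rw [hfB2 x h]; exact he2.maps x h)
  have hinj : ∀ x ∈ M3.carrier, ∀ y ∈ M3.carrier, f x = f y → x = y := by
    intro x hx y hy hxy
    rw [hC] at hx hy
    rcases hx with hx | hx <;> rcases hy with hy | hy
    · rw [hfB1 x hx, hfB1 y hy] at hxy
      exact he1.inj x hx y hy hxy
    · rw [hfB1 x hx, hfB2 y hy] at hxy
      have hA' : f1 x ∈ A'.carrier := by
        rw [← hint']; exact ⟨he1.maps x hx, hxy ▸ he2.maps y hy⟩
      rw [← hAA'] at hA'
      obtain ⟨a0, ha0, hfa0⟩ := hA'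
      have hx0 : x = a0 := he1.inj x hx a0 (hA1.sub ha0) hfa0.symm
      subst hx0
      have h2 : f2 x = f2 y := by rw [← hagree x ha0]; exact hxy
      exact he2.inj x (hA2.sub ha0) y hy h2
    · rw [hfB2 x hx, hfB1 y hy] at hxy
      have hA' : f1 y ∈ A'.carrier := by
        rw [← hint']; exact ⟨he1.maps y hy, hxy ▸ he2.maps x hx⟩
      rw [← hAA'] at hA'
      obtain ⟨a0, ha0, hfa0⟩ := hA'
      have hy0 : y = a0 := he1.inj y hy a0 (hA1.sub ha0) hfa0.symm
      subst hy0
      rw [hagree y ha0] at hxy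
      exact he2.inj x hx y (hA2.sub ha0) hxy
    · rw [hfB2 x hx, hfB2 y hy] at hxy
      exact he2.inj x hx y hy hxy
  have hsurj : ∀ y ∈ M3'.carrier, ∃ x ∈ M3.carrier, f x = y := by
    intro y hy
    rw [hC'] at hy
    rcases hy with h | h
    · obtain ⟨x, hx, hfx⟩ := hs1 h
      exact ⟨x, by rw [hC]; exact Or.inl hx, by rw [hfB1 x hx]; exact hfx⟩
    · obtain ⟨x, hx, hfx⟩ := hs2 h
      exact ⟨x, by rw [hC]; exact Or.inr hx, by rw [hfB2 x hx]; exact hfx⟩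
  have hfA1 : ∀ x ∈ A.carrier, f x = f1 x := fun x hx => hfB1 x (hA1.sub hx)
  have hfA2 : ∀ x ∈ A.carrier, f x = f2 x := fun x hx => hfB2 x (hA2.sub hx)
  have hmemA : ∀ x ∈ A.carrier, x ∈ M3.carrier := fun x hx => by
    rw [hC]; exact Or.inl (hA1.sub hx)
  have hfAmem : ∀ x ∈ A.carrier, f x ∈ A'.carrier := fun x hx => by
    rw [hfA1 x hx, ← hAA']; exact ⟨x, hx, rfl⟩
  have hOn : ∀ a' ∈ A.carrier, ∀ b' ∈ A.carrier, ∀ x ∈ M3.carrier,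
      (OnAmalgLine B1 B2 a' b' x ↔ OnAmalgLine B1' B2' (f a') (f b') (f x)) := by
    intro a' ha' b' hb' x hx
    constructor
    · rintro (⟨hx1, hl⟩ | ⟨hx2, hl⟩)
      · refine Or.inl ⟨by rw [hfB1 x hx1]; exact he1.maps x hx1, ?_⟩
        rw [hfB1 x hx1, hfA1 a' ha', hfA1 b' hb']
        rcases mem_lineOf.mp hl with rfl | rfl | hr
        · exact mem_lineOf.mpr (Or.inl rfl)
        · exact mem_lineOf.mpr (Or.inr (Or.inl rfl))
        · exact mem_lineOf.mpr (Or.inr (Or.inr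
            ((he1.rel a' (hA1.sub ha') b' (hA1.sub hb') x hx1).mp hr)))
      · refine Or.inr ⟨by rw [hfB2 x hx2]; exact he2.maps x hx2, ?_⟩
        rw [hfB2 x hx2, hfA2 a' ha', hfA2 b' hb']
        rcases mem_lineOf.mp hl with rfl | rfl | hr
        · exact mem_lineOf.mpr (Or.inl rfl)
        · exact mem_lineOf.mpr (Or.inr (Or.inl rfl))
        · exact mem_lineOf.mpr (Or.inr (Or.inr
            ((he2.rel a' (hA2.sub ha') b' (hA2.sub hb') x hx2).mp hr)))
    · rintro (⟨hfx1, hl⟩ | ⟨hfx2, hl⟩)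
      · have hx1 := hback1 x hx hfx1
        rw [hfB1 x hx1, hfA1 a' ha', hfA1 b' hb'] at hl
        refine Or.inl ⟨hx1, ?_⟩
        rcases mem_lineOf.mp hl with h | h | hr
        · exact mem_lineOf.mpr (Or.inl (he1.inj x hx1 a' (hA1.sub ha') h))
        · exact mem_lineOf.mpr (Or.inr (Or.inl (he1.inj x hx1 b' (hA1.sub hb') h)))
        · exact mem_lineOf.mpr (Or.inr (Or.inr
            ((he1.rel a' (hA1.sub ha') b' (hA1.sub hb') x hx1).mpr hr)))
      · have hx2 := hback2 x hx hfx2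
        rw [hfB2 x hx2, hfA2 a' ha', hfA2 b' hb'] at hl
        refine Or.inr ⟨hx2, ?_⟩
        rcases mem_lineOf.mp hl with h | h | hr
        · exact mem_lineOf.mpr (Or.inl (he2.inj x hx2 a' (hA2.sub ha') h))
        · exact mem_lineOf.mpr (Or.inr (Or.inl (he2.inj x hx2 b' (hA2.sub hb') h)))
        · exact mem_lineOf.mpr (Or.inr (Or.inr
            ((he2.rel a' (hA2.sub ha') b' (hA2.sub hb') x hx2).mpr hr)))
  have hrel : ∀ a ∈ M3.carrier, ∀ b ∈ M3.carrier, ∀ c ∈ M3.carrier,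
      (M3.R a b c ↔ M3'.R (f a) (f b) (f c)) := by
    intro a ha b hb c hc
    rw [h3.R_iff, h3'.R_iff]
    constructor
    · rintro (h | h | ⟨hab, hac, hbc, a', ha', b', hb', hab', hOa, hOb, hOc⟩)
      · obtain ⟨ha1, hb1, hc1⟩ := B1.R_mem a b c h
        exact Or.inl (by rw [hfB1 a ha1, hfB1 b hb1, hfB1 c hc1]
                         exact (he1.rel a ha1 b hb1 c hc1).mp h)
      · obtain ⟨ha2, hb2, hc2⟩ := B2.R_mem a b c h
        exact Or.inr (Or.inl (by rw [hfB2 a ha2, hfB2 b hb2, hfB2 c hc2]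
                                 exact (he2.rel a ha2 b hb2 c hc2).mp h))
      · exact Or.inr (Or.inr ⟨fun h => hab (hinj a ha b hb h),
          fun h => hac (hinj a ha c hc h), fun h => hbc (hinj b hb c hc h),
          f a', hfAmem a' ha', f b', hfAmem b' hb',
          fun h => hab' (hinj a' (hmemA a' ha') b' (hmemA b' hb') h),
          (hOn a' ha' b' hb' a ha).mp hOa, (hOn a' ha' b' hb' b hb).mp hOb,
          (hOn a' ha' b' hb' c hc).mp hOc⟩)
    · rintro (h | h | ⟨hab, hac, hbc, a'', ha'', b'', hb'', hne, hOa, hOb, hOc⟩)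
      · obtain ⟨ha1, hb1, hc1⟩ := B1'.R_mem _ _ _ h
        have ha1' := hback1 a ha ha1
        have hb1' := hback1 b hb hb1
        have hc1' := hback1 c hc hc1
        rw [hfB1 a ha1', hfB1 b hb1', hfB1 c hc1'] at h
        exact Or.inl ((he1.rel a ha1' b hb1' c hc1').mpr h)
      · obtain ⟨ha2, hb2, hc2⟩ := B2'.R_mem _ _ _ h
        have ha2' := hback2 a ha ha2
        have hb2' := hback2 b hb hb2
        have hc2' := hback2 c hc hc2
        rw [hfB2 a ha2', hfB2 b hb2', hfB2 c hc2'] at h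
        exact Or.inr (Or.inl ((he2.rel a ha2' b hb2' c hc2').mpr h))
      · refine Or.inr (Or.inr ⟨fun h => hab (by rw [h]), fun h => hac (by rw [h]),
          fun h => hbc (by rw [h]), ?_⟩)
        rw [← hAA'] at ha'' hb''
        obtain ⟨a', ha', rfl⟩ := ha''
        obtain ⟨b', hb', rfl⟩ := hb''
        have ea : f a' = f1 a' := hfA1 a' ha'
        have eb : f b' = f1 b' := hfA1 b' hb'
        rw [← ea] at hne hOa hOb hOc
        rw [← eb] at hne hOa hOb hOc
        exact ⟨a', ha', b', hb', fun h => hne (by rw [h]),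
          (hOn a' ha' b' hb' a ha).mpr hOa, (hOn a' ha' b' hb' b hb).mpr hOb,
          (hOn a' ha' b' hb' c hc).mpr hOc⟩
  have hlineSub : ∀ a ∈ M3.carrier, ∀ b ∈ M3.carrier, lineOf M3.R a b ⊆ M3.carrier := by
    intro a ha b hb x hx
    rcases mem_lineOf.mp hx with rfl | rfl | h
    · exact ha
    · exact hb
    · exact (M3.R_mem a b x h).2.2
  have hlineIm : ∀ a ∈ M3.carrier, ∀ b ∈ M3.carrier,
      f '' lineOf M3.R a b = lineOf M3'.R (f a) (f b) := by
    intro a ha b hb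
    ext y
    constructor
    · rintro ⟨x, hx, rfl⟩
      rcases mem_lineOf.mp hx with rfl | rfl | h
      · exact mem_lineOf.mpr (Or.inl rfl)
      · exact mem_lineOf.mpr (Or.inr (Or.inl rfl))
      · exact mem_lineOf.mpr (Or.inr (Or.inr
          ((hrel a ha b hb x ((M3.R_mem a b x h).2.2)).mp h)))
    · intro hy
      rcases mem_lineOf.mp hy with rfl | rfl | h
      · exact ⟨a, mem_lineOf.mpr (Or.inl rfl), rfl⟩
      · exact ⟨b, mem_lineOf.mpr (Or.inr (Or.inl rfl)), rfl⟩
      · obtain ⟨x, hx, rfl⟩ := hsurj y ((M3'.R_mem _ _ _ h).2.2)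
        exact ⟨x, mem_lineOf.mpr (Or.inr (Or.inr ((hrel a ha b hb x hx).mpr h))), rfl⟩
  have himInj : ∀ s t : Set V, s ⊆ M3.carrier → t ⊆ M3.carrier → f '' s = f '' t → s = t := by
    intro s t hs ht h
    apply Set.Subset.antisymm
    · intro x hx
      have hfx : f x ∈ f '' t := h ▸ ⟨x, hx, rfl⟩
      obtain ⟨y, hy, hfy⟩ := hfx
      rwa [hinj y (ht hy) x (hs hx) hfy] at hy
    · intro x hx
      have hfx : f x ∈ f '' s := h.symm ▸ ⟨x, hx, rfl⟩
      obtain ⟨y, hy, hfy⟩ := hfx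
      rwa [hinj y (hs hy) x (ht hx) hfy] at hy
  have hlineEq : ∀ a ∈ M3.carrier, ∀ b ∈ M3.carrier, ∀ c ∈ M3.carrier, ∀ d ∈ M3.carrier,
      (lineOf M3.R a b = lineOf M3.R c d ↔
        lineOf M3'.R (f a) (f b) = lineOf M3'.R (f c) (f d)) := by
    intro a ha b hb c hc d hd
    rw [← hlineIm a ha b hb, ← hlineIm c hc d hd]
    constructor
    · intro h; rw [h]
    · intro h; exact himInj _ _ (hlineSub a ha b hb) (hlineSub c hc d hd) h
  have hwedge : ∀ a ∈ M3.carrier, ∀ b ∈ M3.carrier, ∀ c ∈ M3.carrier, ∀ d ∈ M3.carrier,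
      f (M3.wedge a b c d) = M3'.wedge (f a) (f b) (f c) (f d) := by
    intro a ha b hb c hc d hd
    have hfa := hmaps a ha
    have hfb := hmaps b hb
    have hfc := hmaps c hc
    have hfd := hmaps d hd
    have hwd := M3.wedge_det a b c d ha hb hc hd
    have hwd' := M3'.wedge_det (f a) (f b) (f c) (f d) hfa hfb hfc hfd
    rcases hwd with ⟨hab, hcd, hlne, hw1, hw2, hwnot⟩ | ⟨hwa, hnex⟩
    · have hwC : M3.wedge a b c d ∈ M3.carrier := M3.wedge_mem a b c d ha hb hc hd
      have hfab : f a ≠ f b := fun h => hab (hinj a ha b hb h)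
      have hfcd : f c ≠ f d := fun h => hcd (hinj c hc d hd h)
      have hflne : lineOf M3'.R (f a) (f b) ≠ lineOf M3'.R (f c) (f d) :=
        fun h => hlne ((hlineEq a ha b hb c hc d hd).mpr h)
      have hfw1 : f (M3.wedge a b c d) ∈ lineOf M3'.R (f a) (f b) := by
        rw [← hlineIm a ha b hb]; exact ⟨_, hw1, rfl⟩
      have hfw2 : f (M3.wedge a b c d) ∈ lineOf M3'.R (f c) (f d) := by
        rw [← hlineIm c hc d hd]; exact ⟨_, hw2, rfl⟩
      rcases hwd' with ⟨_, _, _, hw1', hw2', _⟩ | ⟨_, hnex'⟩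
      · exact inter_unique M3' hfab hfcd hflne hfw1 hfw2 hw1' hw2'
      · exfalso
        apply hnex'
        refine ⟨f (M3.wedge a b c d), hfab, hfcd, hflne, hfw1, hfw2, ?_⟩
        simp only [Set.mem_insert_iff, Set.mem_singleton_iff] at hwnot ⊢
        push_neg at hwnot ⊢
        obtain ⟨n1, n2, n3, n4⟩ := hwnot
        exact ⟨fun h => n1 (hinj _ hwC a ha h), fun h => n2 (hinj _ hwC b hb h),
          fun h => n3 (hinj _ hwC c hc h), fun h => n4 (hinj _ hwC d hd h)⟩
    · rcases hwd' with ⟨hab', hcd', hlne', hw1', hw2', hwnot'⟩ | ⟨hwa', _⟩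
      · exfalso
        apply hnex
        have hpC : M3'.wedge (f a) (f b) (f c) (f d) ∈ M3'.carrier :=
          M3'.wedge_mem _ _ _ _ hfa hfb hfc hfd
        obtain ⟨p, hp, hfp⟩ := hsurj _ hpC
        rw [← hfp] at hw1' hw2' hwnot'
        have hab2 : a ≠ b := fun h => hab' (by rw [h])
        have hcd2 : c ≠ d := fun h => hcd' (by rw [h])
        have hlne2 : lineOf M3.R a b ≠ lineOf M3.R c d :=
          fun h => hlne' ((hlineEq a ha b hb c hc d hd).mp h)
        have hp1 : p ∈ lineOf M3.R a b := by
          rw [← hlineIm a ha b hb] at hw1'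
          obtain ⟨x, hx', hfx⟩ := hw1'
          rwa [hinj x (hlineSub a ha b hb hx') p hp hfx] at hx'
        have hp2 : p ∈ lineOf M3.R c d := by
          rw [← hlineIm c hc d hd] at hw2'
          obtain ⟨x, hx', hfx⟩ := hw2'
          rwa [hinj x (hlineSub c hc d hd hx') p hp hfx] at hx'
        have hpnot : p ∉ ({a, b, c, d} : Set V) := by
          intro hmem
          apply hwnot'
          simp only [Set.mem_insert_iff, Set.mem_singleton_iff] at hmem ⊢
          rcases hmem with rfl | rfl | rfl | rfl
          · exact Or.inl rfl
          · exact Or.inr (Or.inl rfl)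
          · exact Or.inr (Or.inr (Or.inl rfl))
          · exact Or.inr (Or.inr (Or.inr rfl))
        exact ⟨p, hab2, hcd2, hlne2, hp1, hp2, hpnot⟩
      · rw [hwa, hwa']
  refine ⟨⟨hmaps, hinj, hrel, hwedge⟩, fun y hy => ?_⟩
  obtain ⟨x, hx, hfx⟩ := hsurj y hy
  exact ⟨x, hx, hfx⟩
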